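/- Block compression preserves powers up to boundary loss: let bc be the block-compression map replacing each maximal block a^ℓ of a word by the letter (a,ℓ). If w^m is a factor of a word s with w ≠ ε, writing w = b^ℓ u a^r where u neither begins with b nor ends with a (and w is not a power of a single letter), then bc applied to s contains the factor (bc(u a^r b^ℓ))^{m−1}; consequently the exponent of periodicity satisfies per(bc(s)) ≥ per(s) − 1 whenever per(s) is not witnessed by a power of a single letter. -/
import Mathlib


variable {Γ : Type*}

/-- m-th power of a word. -/
def wpow {α : Type*} (w : List α) (m : ℕ) : List α := (List.replicate m w).flatten

/-- Block compression: replace each maximal block a^ℓ by the single symbol (a, ℓ). -/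
def bc [DecidableEq Γ] : List Γ → List (Γ × ℕ)
  | [] => []
  | a :: xs =>
    match bc xs with
    | [] => [(a, 1)]
    | (b, ℓ) :: rest => if a = b then (a, ℓ + 1) :: rest else (a, 1) :: (b, ℓ) :: rest

/-- The exponent of periodicity of s is at least k. -/
def perAtLeast {α : Type*} (s : List α) (k : ℕ) : Prop :=
  ∃ u : List α, u ≠ [] ∧ wpow u k <:+: s

lemma wpow_succ {α : Type*} (w : List α) (n : ℕ) : wpow w (n+1) = w ++ wpow w n := by
  simp [wpow, List.replicate_succ]

lemma wpow_succ' {α : Type*} (w : List α) (n : ℕ) : wpow w (n+1) = wpow w n ++ w := by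
  simp [wpow, List.replicate_succ']

lemma bc_nil [DecidableEq Γ] : bc ([] : List Γ) = [] := rfl

lemma bc_cons [DecidableEq Γ] (a : Γ) (xs : List Γ) :
    bc (a :: xs) = match bc xs with
      | [] => [(a, 1)]
      | (b, ℓ) :: rest => if a = b then (a, ℓ + 1) :: rest else (a, 1) :: (b, ℓ) :: rest := rfl

lemma bc_cons_head [DecidableEq Γ] (a : Γ) (xs : List Γ) :
    ∃ k rest, bc (a :: xs) = (a, k) :: rest := by
  rcases h : bc xs with _ | ⟨⟨c, k⟩, rest⟩
  · exact ⟨1, [], by rw [bc_cons, h]⟩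
  · by_cases hac : a = c
    · exact ⟨k + 1, rest, by rw [bc_cons, h]; simp [hac]⟩
    · exact ⟨1, (c, k) :: rest, by rw [bc_cons, h]; simp [hac]⟩

lemma bc_ne_nil [DecidableEq Γ] {z : List Γ} (h : z ≠ []) : bc z ≠ [] := by
  cases z with
  | nil => simp at h
  | cons a xs =>
    obtain ⟨k, rest, hk⟩ := bc_cons_head a xs
    simp [hk]

lemma bc_append [DecidableEq Γ] : ∀ (x y : List Γ),
    (∀ c, x.getLast? = some c → y.head? ≠ some c) → bc (x ++ y) = bc x ++ bc y
  | [], y, _ => by rw [List.nil_append, bc_nil, List.nil_append]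
  | [a], y, h => by
    cases y with
    | nil => simp [bc_nil]
    | cons c ys =>
      obtain ⟨k, rest, hk⟩ := bc_cons_head c ys
      have hac : a ≠ c := by
        intro hac
        exact h a rfl (by rw [hac, List.head?_cons])
      show bc (a :: (c :: ys)) = bc [a] ++ bc (c :: ys)
      rw [bc_cons, hk]
      simp [hac, bc]
  | a :: a' :: x', y, h => by
    have ih := bc_append (a' :: x') y (fun c hc => h c (by rwa [List.getLast?_cons_cons]))
    obtain ⟨k', rest', hk'⟩ := bc_cons_head a' x'
    have h2 : bc ((a' :: x') ++ y) = (a', k') :: (rest' ++ bc y) := by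
      rw [ih, hk', List.cons_append]
    show bc (a :: ((a' :: x') ++ y)) = bc (a :: a' :: x') ++ bc y
    rw [bc_cons, h2, bc_cons, hk']
    by_cases hac : a = a' <;> simp [hac]

lemma bc_wpow [DecidableEq Γ] (t : List Γ) (ht : t ≠ [])
    (h : ∀ c, t.getLast? = some c → t.head? ≠ some c) :
    ∀ n, bc (wpow t n) = wpow (bc t) n := by
  intro n; induction n with
  | zero => rfl
  | succ n ih =>
    rw [wpow_succ, wpow_succ, bc_append t _ ?_, ih]
    intro c hc
    cases n with
    | zero => simp [wpow]
    | succ n =>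
      rw [wpow_succ, List.head?_append_of_ne_nil _ ht]
      exact h c hc

lemma wpow_conj {α : Type*} (x y : List α) :
    ∀ m, wpow (x ++ y) (m+1) = x ++ wpow (y ++ x) m ++ y
  | 0 => by simp [wpow]
  | m+1 => by
    rw [wpow_succ, wpow_conj x y m, wpow_succ]
    simp

lemma head?_replicate_pos {α : Type*} (b : α) {ℓ : ℕ} (hℓ : 1 ≤ ℓ) :
    (List.replicate ℓ b).head? = some b := by
  obtain ⟨ℓ', rfl⟩ : ∃ ℓ', ℓ = ℓ' + 1 := ⟨ℓ - 1, by omega⟩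
  rw [List.replicate_succ]; rfl

lemma getLast?_append_replicate {α : Type*} (x : List α) (b : α) {ℓ : ℕ} (hℓ : 1 ≤ ℓ) :
    (x ++ List.replicate ℓ b).getLast? = some b := by
  obtain ⟨ℓ', rfl⟩ : ∃ ℓ', ℓ = ℓ' + 1 := ⟨ℓ - 1, by omega⟩
  rw [List.replicate_succ', ← List.append_assoc, List.getLast?_concat]

lemma replicate_ne_nil_of_pos {α : Type*} (b : α) {ℓ : ℕ} (hℓ : 1 ≤ ℓ) :
    List.replicate ℓ b ≠ ([] : List α) := by
  intro h
  have := congrArg List.length h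
  simp at this
  omega

lemma part1 [DecidableEq Γ] (s w u : List Γ) (a b : Γ) (ℓ r m : ℕ)
    (hw : w = List.replicate ℓ b ++ u ++ List.replicate r a)
    (hℓ : 1 ≤ ℓ) (hr : 1 ≤ r)
    (hu1 : u.head? ≠ some b) (hu2 : u.getLast? ≠ some a)
    (hnp : ¬ ∃ (x : Γ) (k : ℕ), w = List.replicate k x)
    (hinf : wpow w m <:+: s) :
    wpow (bc (u ++ List.replicate r a ++ List.replicate ℓ b)) (m - 1) <:+: bc s := by
  obtain _ | _ | m := m
  · simpa [wpow] using List.nil_infix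
  · simpa [wpow] using List.nil_infix
  have hab : u = [] → a ≠ b := by
    rintro rfl rfl
    exact hnp ⟨a, ℓ + r, by rw [hw, List.replicate_add, List.append_nil]⟩
  -- head of the "front" part u ++ a^r is not b
  have hfrontne : u ++ List.replicate r a ≠ [] := by
    intro h
    exact replicate_ne_nil_of_pos a hr (List.append_eq_nil_iff.mp h).2
  have hfront : ∀ c, (u ++ List.replicate r a).head? = some c → c ≠ b := by
    intro c hc hcb
    subst hcb
    cases u with
    | nil =>
      rw [List.nil_append, head?_replicate_pos a hr] at hc
      exact hab rfl (Option.some.inj hc)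
    | cons d u' =>
      rw [List.cons_append, List.head?_cons] at hc
      exact hu1 (by rw [List.head?_cons, Option.some.inj hc])
  set t := u ++ List.replicate r a ++ List.replicate ℓ b with ht
  have ht2 : t = (u ++ List.replicate r a) ++ List.replicate ℓ b := by
    rw [ht]
  have htne : t ≠ [] := by
    rw [ht2]
    intro h
    exact replicate_ne_nil_of_pos b hℓ (List.append_eq_nil_iff.mp h).2
  have hthead : ∀ c, t.head? = some c → c ≠ b := by
    intro c hc
    rw [ht2, List.head?_append_of_ne_nil _ hfrontne] at hc
    exact hfront c hc
  have htlast : t.getLast? = some b := by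
    rw [ht2]
    exact getLast?_append_replicate _ b hℓ
  -- decompose the power
  have hdecomp : wpow w (m + 2) =
      List.replicate ℓ b ++ wpow t (m + 1) ++ (u ++ List.replicate r a) := by
    have hw' : w = List.replicate ℓ b ++ (u ++ List.replicate r a) := by
      rw [hw, List.append_assoc]
    rw [hw', wpow_conj, ← ht2]
  obtain ⟨p, q, hs⟩ := hinf
  have hs' : s = (p ++ List.replicate ℓ b) ++ wpow t (m + 1) ++
      ((u ++ List.replicate r a) ++ q) := by
    rw [← hs, hdecomp]; simp
  have hYne : wpow t (m + 1) ≠ [] := by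
    rw [wpow_succ]
    intro h
    exact htne (List.append_eq_nil_iff.mp h).1
  have hYhead : (wpow t (m + 1)).head? = t.head? := by
    rw [wpow_succ, List.head?_append_of_ne_nil _ htne]
  have hYlast : (wpow t (m + 1)).getLast? = some b := by
    rw [wpow_succ', List.getLast?_append_of_ne_nil _ htne, htlast]
  have step1 : bc s = bc (p ++ List.replicate ℓ b) ++
      bc (wpow t (m + 1) ++ ((u ++ List.replicate r a) ++ q)) := by
    rw [hs', List.append_assoc, bc_append]
    intro c hc hc2
    rw [getLast?_append_replicate _ b hℓ] at hc
    obtain rfl : c = b := (Option.some.inj hc).symm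
    rw [List.head?_append_of_ne_nil _ hYne, hYhead] at hc2
    exact hthead _ hc2 rfl
  have step2 : bc (wpow t (m + 1) ++ ((u ++ List.replicate r a) ++ q)) =
      bc (wpow t (m + 1)) ++ bc ((u ++ List.replicate r a) ++ q) := by
    rw [bc_append]
    intro c hc hc2
    rw [hYlast] at hc
    obtain rfl : c = b := (Option.some.inj hc).symm
    rw [List.head?_append_of_ne_nil _ hfrontne] at hc2
    exact hfront _ hc2 rfl
  have step3 : bc (wpow t (m + 1)) = wpow (bc t) (m + 1) := by
    refine bc_wpow t htne ?_ _
    intro c hc hc2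
    rw [htlast] at hc
    obtain rfl : c = b := (Option.some.inj hc).symm
    exact hthead _ hc2 rfl
  refine ⟨bc (p ++ List.replicate ℓ b), bc ((u ++ List.replicate r a) ++ q), ?_⟩
  rw [step1, step2, step3]
  simp only [Nat.add_sub_cancel, ← ht, List.append_assoc]

lemma split_first_block [DecidableEq Γ] : ∀ (w : List Γ) (b : Γ), w.head? = some b →
    ∃ ℓ rest, 1 ≤ ℓ ∧ w = List.replicate ℓ b ++ rest ∧ rest.head? ≠ some b
  | [], b, h => by simp at h
  | c :: w', b, h => by
    obtain rfl : c = b := Option.some.inj (by rwa [List.head?_cons] at h)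
    by_cases h' : w'.head? = some c
    · obtain ⟨ℓ, rest, h1, h2, h3⟩ := split_first_block w' c h'
      exact ⟨ℓ + 1, rest, by omega, by rw [List.replicate_succ, List.cons_append, ← h2], h3⟩
    · exact ⟨1, w', le_refl 1, by rw [List.replicate_succ]; rfl, h'⟩

lemma decomp [DecidableEq Γ] (w : List Γ) (hwne : w ≠ [])
    (hnp : ¬ ∃ (x : Γ) (k : ℕ), w = List.replicate k x) :
    ∃ (u : List Γ) (a b : Γ) (ℓ r : ℕ),
      w = List.replicate ℓ b ++ u ++ List.replicate r a ∧ 1 ≤ ℓ ∧ 1 ≤ r ∧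
      u.head? ≠ some b ∧ u.getLast? ≠ some a := by
  obtain ⟨b, hb⟩ : ∃ b, w.head? = some b := by
    cases w with
    | nil => exact absurd rfl hwne
    | cons c w' => exact ⟨c, rfl⟩
  obtain ⟨ℓ, rest, hℓ, hwsplit, hresth⟩ := split_first_block w b hb
  have hrestne : rest ≠ [] := by
    rintro rfl
    exact hnp ⟨b, ℓ, by simpa using hwsplit⟩
  obtain ⟨a, ha⟩ : ∃ a, rest.reverse.head? = some a := by
    cases h : rest.reverse with
    | nil => exact absurd (by simpa using h) hrestne
    | cons c l => exact ⟨c, rfl⟩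
  obtain ⟨r, ur, hr, hrsplit, hurh⟩ := split_first_block rest.reverse a ha
  have hrest2 : rest = ur.reverse ++ List.replicate r a := by
    have h2 := congrArg List.reverse hrsplit
    rw [List.reverse_reverse, List.reverse_append, List.reverse_replicate] at h2
    exact h2
  refine ⟨ur.reverse, a, b, ℓ, r, ?_, hℓ, hr, ?_, ?_⟩
  · rw [hwsplit, hrest2, List.append_assoc]
  · cases hur : ur.reverse with
    | nil => simp
    | cons c l =>
      intro hc
      rw [List.head?_cons] at hc
      obtain rfl : c = b := Option.some.inj hc
      apply hresth
      rw [hrest2, hur, List.cons_append, List.head?_cons]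
  · rw [List.getLast?_reverse]
    exact hurh

/-- Block compression preserves powers up to boundary loss: if w^m is a factor of s,
where w = b^ℓ u a^r (u not beginning with b nor ending with a, w not a power of a single
letter), then bc(s) contains the factor bc(u a^r b^ℓ)^{m−1}. Consequently
per(bc s) ≥ per(s) − 1 whenever per(s) is witnessed by a power of a non-single-letter word. -/
theorem stmt14 [DecidableEq Γ] :
    (∀ (s w u : List Γ) (a b : Γ) (ℓ r m : ℕ),
      w = List.replicate ℓ b ++ u ++ List.replicate r a →
      1 ≤ ℓ → 1 ≤ r →
      u.head? ≠ some b → u.getLast? ≠ some a →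
      (¬ ∃ (x : Γ) (k : ℕ), w = List.replicate k x) →
      wpow w m <:+: s →
      wpow (bc (u ++ List.replicate r a ++ List.replicate ℓ b)) (m - 1) <:+: bc s) ∧
    (∀ (s : List Γ) (m : ℕ),
      (∃ w : List Γ, w ≠ [] ∧ (¬ ∃ (x : Γ) (k : ℕ), w = List.replicate k x) ∧
        wpow w m <:+: s) →
      perAtLeast (bc s) (m - 1)) := by
  constructor
  · exact part1
  · rintro s m ⟨w, hwne, hnp, hinf⟩
    obtain ⟨u, a, b, ℓ, r, hw, hℓ, hr, hu1, hu2⟩ := decomp w hwne hnp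
    refine ⟨bc (u ++ List.replicate r a ++ List.replicate ℓ b), ?_, ?_⟩
    · apply bc_ne_nil
      intro h
      have := congrArg List.length h
      simp at this
      omega
    · exact part1 s w u a b ℓ r m hw hℓ hr hu1 hu2 hnp hinf
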